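/- Let $K$ be an imaginary quadratic field with class number 1 and $\lambda \in \mathbb{C}^\star$. If $A, B \in \mathcal{C}_{K,\mathbb{C}}$ satisfy $\lambda D_K = \mathrm{Conv}(A \cup B)$, then $A = \lambda D_K$ or $B = \lambda D_K$ (and the other is contained in it). That is, the elements $\lambda D_K$ are the indecomposable elements of $\mathcal{C}_{K,\mathbb{C}}$ with respect to the operation $\mathrm{Conv}(\bullet \cup \bullet)$. -/

import Mathlib

/-!
Let `R` be the largest modulus of a point of `D`, and let `perimeter C` be the integral of the
support function of `C` over the unit circle. Every `C ∈ 𝒞_{K,ℂ}` is a convex polygon with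
`perimeter D * ‖x‖ ≤ R * perimeter C` for all `x ∈ C`: the generators `h • D` satisfy this
because `perimeter (h • D) = ‖h‖ * perimeter D`, `Conv(• ∪ •)` preserves it because the largest
modulus is attained on `A ∪ B` while the perimeter can only grow, and Minkowski sums preserve it
because the modulus is subadditive and the perimeter additive.

A point `P` of maximal modulus `‖λ‖ * R` in `λ • D = Conv(A ∪ B)` is an extreme point of the
disc of that radius, hence lies in `A` or in `B`, say in `A ⊆ λ • D`. The invariant then gives
`perimeter A ≥ ‖λ‖ * perimeter D = perimeter (λ • D)`, and a proper convex subpolygon has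
strictly smaller perimeter, so `A = λ • D`.
-/

open Pointwise

/-- The sub-semiring of subsets of `ℂ` generated by a family `G` (for the operations
convex hull of union and Minkowski sum), together with the neutral elements `∅`, `{0}`. -/
def genSemiring (G : Set (Set ℂ)) : Set (Set ℂ) :=
  ⋂₀ {T : Set (Set ℂ) | G ⊆ T ∧ ∅ ∈ T ∧ {(0 : ℂ)} ∈ T ∧
      (∀ A ∈ T, ∀ B ∈ T, convexHull ℝ (A ∪ B) ∈ T) ∧
      (∀ A ∈ T, ∀ B ∈ T, A + B ∈ T)}

/-- The semiring `𝒞_{K,ℂ}` generated by the translates `h·D_K`, `h ∈ ℂ`. -/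
def CKC (D : Set ℂ) : Set (Set ℂ) :=
  genSemiring {C : Set ℂ | ∃ h : ℂ, C = h • D}

open Complex Set
open scoped InnerProductSpace ComplexConjugate Real

noncomputable def supportFun (C : Set ℂ) (u : ℂ) : ℝ := sSup ((⟪u, ·⟫_ℝ) '' C)

section SupportFun

variable {C L : Set ℂ}

theorem le_supportFun (hC : IsCompact C) {z : ℂ} (hz : z ∈ C) (u : ℂ) :
    ⟪u, z⟫_ℝ ≤ supportFun C u :=
  le_csSup (hC.bddAbove_image (by fun_prop)) (mem_image_of_mem _ hz)

theorem supportFun_mono (hC : C.Nonempty) (hL : IsCompact L) (hCL : C ⊆ L) (u : ℂ) :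
    supportFun C u ≤ supportFun L u :=
  csSup_le_csSup (hL.bddAbove_image (by fun_prop)) (hC.image _) (image_mono hCL)

theorem supportFun_add (hC : IsCompact C) (hC' : C.Nonempty) (hL : IsCompact L)
    (hL' : L.Nonempty) (u : ℂ) : supportFun (C + L) u = supportFun C u + supportFun L u := by
  have : (⟪u, ·⟫_ℝ) '' (C + L) = (⟪u, ·⟫_ℝ) '' C + (⟪u, ·⟫_ℝ) '' L :=
    Set.image_add (innerSL ℝ u)
  rw [supportFun, this, csSup_add (hC'.image _) (hC.bddAbove_image (by fun_prop))
    (hL'.image _) (hL.bddAbove_image (by fun_prop))]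
  rfl

theorem supportFun_smul_of_nonneg {r : ℝ} (hr : 0 ≤ r) (C : Set ℂ) (u : ℂ) :
    supportFun C (r • u) = r * supportFun C u := by
  simp only [supportFun, real_inner_smul_left]
  rw [← smul_eq_mul, ← Real.sSup_smul_of_nonneg hr, ← image_smul, image_image]
  rfl

theorem supportFun_smul_set (h : ℂ) (C : Set ℂ) (u : ℂ) :
    supportFun (h • C) u = supportFun C (conj h * u) := by
  rw [supportFun, supportFun, ← image_smul, image_image]
  congr 2
  ext z
  simp only [Complex.inner, smul_eq_mul, map_mul, conj_conj]
  ring_nf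

theorem continuous_supportFun (hC : IsCompact C) : Continuous (supportFun C) :=
  hC.continuous_sSup (f := fun u z => ⟪u, z⟫_ℝ) continuous_inner

end SupportFun

-- Cauchy's formula: for a convex body `C` this is its perimeter.
noncomputable def perimeter (C : Set ℂ) : ℝ := ∫ θ in -π..π, supportFun C (exp (θ * I))

section Perimeter

variable {C L : Set ℂ}

theorem continuous_supportFun_exp (hC : IsCompact C) :
    Continuous fun θ : ℝ => supportFun C (exp (θ * I)) :=
  (continuous_supportFun hC).comp (by fun_prop)

theorem perimeter_nonneg (hC : IsCompact C) (h0 : (0 : ℂ) ∈ C) : 0 ≤ perimeter C :=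
  intervalIntegral.integral_nonneg (by linarith [Real.pi_pos]) fun θ _ => by
    simpa using le_supportFun hC h0 (exp (θ * I))

theorem perimeter_mono (hC : IsCompact C) (hC' : C.Nonempty) (hL : IsCompact L) (hCL : C ⊆ L) :
    perimeter C ≤ perimeter L :=
  intervalIntegral.integral_mono_on (by linarith [Real.pi_pos])
    ((continuous_supportFun_exp hC).intervalIntegrable _ _)
    ((continuous_supportFun_exp hL).intervalIntegrable _ _)
    fun θ _ => supportFun_mono hC' hL hCL _

theorem perimeter_add (hC : IsCompact C) (hC' : C.Nonempty) (hL : IsCompact L)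
    (hL' : L.Nonempty) : perimeter (C + L) = perimeter C + perimeter L := by
  rw [perimeter, perimeter, perimeter, ← intervalIntegral.integral_add
    ((continuous_supportFun_exp hC).intervalIntegrable _ _)
    ((continuous_supportFun_exp hL).intervalIntegrable _ _)]
  exact intervalIntegral.integral_congr fun θ _ => supportFun_add hC hC' hL hL' _

theorem perimeter_smul_set (h : ℂ) (C : Set ℂ) : perimeter (h • C) = ‖h‖ * perimeter C := by
  -- `conj h = ‖h‖ * exp (-arg h * I)`: scaling by `h` rotates the support function by `arg h`.
  have hrot (θ : ℝ) : supportFun (h • C) (exp (θ * I)) =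
      ‖h‖ * supportFun C (exp (↑(θ - arg h) * I)) := by
    rw [supportFun_smul_set, ← supportFun_smul_of_nonneg (norm_nonneg h)]
    congr 1
    conv_lhs => rw [← norm_mul_exp_arg_mul_I h]
    rw [map_mul, ← exp_conj, real_smul]
    simp only [map_mul, conj_ofReal, conj_I, ofReal_sub]
    rw [mul_assoc, ← exp_add]
    ring_nf
  have hper : Function.Periodic (fun θ : ℝ => supportFun C (exp (θ * I))) (2 * π) := by
    intro θ
    simp only [ofReal_add, ofReal_mul, ofReal_ofNat, add_mul, exp_add, exp_two_pi_mul_I, mul_one]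
  simp only [perimeter, hrot, intervalIntegral.integral_const_mul,
    intervalIntegral.integral_comp_sub_right (fun θ : ℝ => supportFun C (exp (θ * I)))]
  congr 1
  convert hper.intervalIntegral_add_eq (-π - arg h) (-π) using 1 <;> ring_nf

end Perimeter

theorem exists_supportFun_exp_lt {C : Set ℂ} (hC : Convex ℝ C) (hCc : IsClosed C)
    (hC' : C.Nonempty) {z : ℂ} (hz : z ∉ C) :
    ∃ θ ∈ Icc (-π) π, supportFun C (exp (θ * I)) < ⟪exp (θ * I), z⟫_ℝ := by
  obtain ⟨f, s, hfC, hfz⟩ := geometric_hahn_banach_closed_point hC hCc hz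
  set c := (InnerProductSpace.toDual ℝ ℂ).symm f
  have hf (w : ℂ) : f w = ⟪c, w⟫_ℝ := InnerProductSpace.toDual_symm_apply.symm
  have hsep : supportFun C c < ⟪c, z⟫_ℝ :=
    (csSup_le (hC'.image _) (forall_mem_image.2 fun a ha => (hf a ▸ hfC a ha).le)).trans_lt
      (hf z ▸ hfz)
  have hc : c = ‖c‖ • exp (arg c * I) := by rw [real_smul, norm_mul_exp_arg_mul_I]
  refine ⟨arg c, ⟨(neg_pi_lt_arg c).le, arg_le_pi c⟩, lt_of_mul_lt_mul_left ?_ (norm_nonneg c)⟩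
  rwa [← supportFun_smul_of_nonneg (norm_nonneg c), ← real_inner_smul_left, ← hc]

theorem perimeter_lt_of_ssubset {C L : Set ℂ} (hC : IsCompact C) (hCc : Convex ℝ C)
    (hC' : C.Nonempty) (hL : IsCompact L) (hCL : C ⊂ L) : perimeter C < perimeter L := by
  obtain ⟨z, hzL, hzC⟩ := exists_of_ssubset hCL
  obtain ⟨θ, hθ, hlt⟩ := exists_supportFun_exp_lt hCc hC.isClosed hC' hzC
  exact intervalIntegral.integral_lt_integral_of_continuousOn_of_le_of_exists_lt
    (by linarith [Real.pi_pos]) (continuous_supportFun_exp hC).continuousOn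
    (continuous_supportFun_exp hL).continuousOn (fun θ _ => supportFun_mono hC' hL hCL.1 _)
    ⟨θ, hθ, hlt.trans_le (le_supportFun hL hzL _)⟩

theorem mem_of_mem_convexHull_of_forall_norm_le {E : Type*} [NormedAddCommGroup E]
    [NormedSpace ℝ E] [StrictConvexSpace ℝ E] {s : Set E} {x : E} (hx : x ∈ convexHull ℝ s)
    (hs : ∀ z ∈ s, ‖z‖ ≤ ‖x‖) : x ∈ s := by
  have hball : convexHull ℝ s ⊆ Metric.closedBall 0 ‖x‖ :=
    convexHull_min (fun z hz => mem_closedBall_zero_iff.2 (hs z hz)) (convex_closedBall _ _)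
  have hext : x ∈ extremePoints ℝ (Metric.closedBall 0 ‖x‖) := by
    rcases eq_or_ne ‖x‖ 0 with h | h
    · rw [h, Metric.closedBall_zero, norm_eq_zero.1 h, extremePoints_singleton]
      exact mem_singleton 0
    · exact StrictConvexSpace.sphere_subset_extremePoints_closedBall 0 h (by simp)
  exact extremePoints_convexHull_subset
    (inter_extremePoints_subset_extremePoints_of_subset hball ⟨hx, hext⟩)

theorem Convex.zero_mem_of_neg_eq {E : Type*} [AddCommGroup E] [Module ℝ E] {D : Set E}
    (hD : Convex ℝ D) (hD' : D.Nonempty) (hsymm : -D = D) : (0 : E) ∈ D := by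
  obtain ⟨z, hz⟩ := hD'
  rw [show (0 : E) = (1 / 2 : ℝ) • z + (1 / 2 : ℝ) • -z by rw [smul_neg, add_neg_cancel]]
  exact hD hz (hsymm ▸ neg_mem_neg.2 hz) (by norm_num) (by norm_num) (by norm_num)

theorem IsCompact.exists_norm_pos_isMaxOn {E : Type*} [NormedAddCommGroup E] [NormedSpace ℝ E]
    [Nontrivial E] {D : Set E} (hD : IsCompact D) (hint : (interior D).Nonempty) :
    ∃ P ∈ D, 0 < ‖P‖ ∧ IsMaxOn norm D P := by
  obtain ⟨P, hPD, hPmax⟩ :=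
    hD.exists_isMaxOn (hint.mono interior_subset) continuous_norm.continuousOn
  refine ⟨P, hPD, ?_, hPmax⟩
  by_contra! hP
  have hD0 : D ⊆ {0} := fun z hz => by simpa using (hPmax hz).trans hP
  simpa [interior_singleton] using interior_mono hD0 hint.some_mem

theorem genSemiring_subset {G T : Set (Set ℂ)} (hG : G ⊆ T) (hempty : ∅ ∈ T)
    (hzero : {(0 : ℂ)} ∈ T) (hconv : ∀ A ∈ T, ∀ B ∈ T, convexHull ℝ (A ∪ B) ∈ T)
    (hadd : ∀ A ∈ T, ∀ B ∈ T, A + B ∈ T) : genSemiring G ⊆ T :=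
  sInter_subset_of_mem ⟨hG, hempty, hzero, hconv, hadd⟩

structure IsNormBoundedByPerimeter (a b : ℝ) (C : Set ℂ) : Prop where
  exists_finite : ∃ S : Set ℂ, S.Finite ∧ C = convexHull ℝ S
  norm_le : ∀ x ∈ C, a * ‖x‖ ≤ b * perimeter C

namespace IsNormBoundedByPerimeter

variable {a b : ℝ} {A B C : Set ℂ}

theorem isCompact (hC : IsNormBoundedByPerimeter a b C) : IsCompact C := by
  obtain ⟨⟨S, hS, rfl⟩, -⟩ := hC
  exact hS.isCompact_convexHull ℝ

theorem convex (hC : IsNormBoundedByPerimeter a b C) : Convex ℝ C := by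
  obtain ⟨⟨S, -, rfl⟩, -⟩ := hC
  exact convex_convexHull ℝ S

theorem empty : IsNormBoundedByPerimeter a b ∅ :=
  ⟨⟨∅, finite_empty, convexHull_empty.symm⟩, fun _ h => h.elim⟩

theorem smul_set (hC : IsNormBoundedByPerimeter a b C) (h : ℂ) :
    IsNormBoundedByPerimeter a b (h • C) := by
  obtain ⟨⟨S, hS, rfl⟩, hbound⟩ := hC
  refine ⟨⟨h • S, hS.smul_set, ?_⟩, ?_⟩
  · exact (LinearMap.mulLeft ℝ h).image_convexHull S
  · rintro _ ⟨x, hx, rfl⟩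
    rw [perimeter_smul_set, norm_smul, mul_left_comm, mul_left_comm b]
    exact mul_le_mul_of_nonneg_left (hbound x hx) (norm_nonneg h)

theorem convexHull_union (ha : 0 ≤ a) (hb : 0 ≤ b) (hA : IsNormBoundedByPerimeter a b A)
    (hB : IsNormBoundedByPerimeter a b B) :
    IsNormBoundedByPerimeter a b (convexHull ℝ (A ∪ B)) := by
  have hpoly : ∃ S : Set ℂ, S.Finite ∧ convexHull ℝ (A ∪ B) = convexHull ℝ S := by
    obtain ⟨S, hS, rfl⟩ := hA.exists_finite
    obtain ⟨T, hT, rfl⟩ := hB.exists_finite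
    refine ⟨S ∪ T, hS.union hT, ?_⟩
    rw [convexHull_convexHull_union_left, convexHull_convexHull_union_right]
  have hH : IsCompact (convexHull ℝ (A ∪ B)) := by
    obtain ⟨S, hS, hSeq⟩ := hpoly
    exact hSeq ▸ hS.isCompact_convexHull ℝ
  refine ⟨hpoly, fun x hx => ?_⟩
  obtain ⟨y, hy, hxy⟩ := convexOn_univ_norm.exists_ge_of_mem_convexHull (subset_univ _) hx
  have hbound {U : Set ℂ} (hU : IsNormBoundedByPerimeter a b U) (hUAB : U ⊆ A ∪ B)
      (hyU : y ∈ U) : a * ‖x‖ ≤ b * perimeter (convexHull ℝ (A ∪ B)) :=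
    calc a * ‖x‖ ≤ a * ‖y‖ := mul_le_mul_of_nonneg_left hxy ha
      _ ≤ b * perimeter U := hU.norm_le y hyU
      _ ≤ _ := mul_le_mul_of_nonneg_left (perimeter_mono hU.isCompact ⟨y, hyU⟩ hH
          (hUAB.trans (subset_convexHull ℝ _))) hb
  rcases hy with hy | hy
  · exact hbound hA subset_union_left hy
  · exact hbound hB subset_union_right hy

theorem add (ha : 0 ≤ a) (hA : IsNormBoundedByPerimeter a b A)
    (hB : IsNormBoundedByPerimeter a b B) : IsNormBoundedByPerimeter a b (A + B) := by
  refine ⟨?_, ?_⟩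
  · obtain ⟨S, hS, rfl⟩ := hA.exists_finite
    obtain ⟨T, hT, rfl⟩ := hB.exists_finite
    exact ⟨S + T, hS.add hT, (convexHull_add S T).symm⟩
  rintro _ ⟨x, hx, y, hy, rfl⟩
  dsimp only
  rw [perimeter_add hA.isCompact ⟨x, hx⟩ hB.isCompact ⟨y, hy⟩]
  calc a * ‖x + y‖ ≤ a * ‖x‖ + a * ‖y‖ := by
        rw [← mul_add]; exact mul_le_mul_of_nonneg_left (norm_add_le x y) ha
    _ ≤ b * perimeter A + b * perimeter B := add_le_add (hA.norm_le x hx) (hB.norm_le y hy)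
    _ = _ := (mul_add _ _ _).symm

theorem eq_of_subset (hb : 0 < b) (hC : IsNormBoundedByPerimeter a b C) {L : Set ℂ}
    (hL : IsCompact L) (hCL : C ⊆ L) {x : ℂ} (hx : x ∈ C) (hxL : b * perimeter L ≤ a * ‖x‖) :
    C = L := by
  by_contra hne
  have hlt := perimeter_lt_of_ssubset hC.isCompact hC.convex ⟨x, hx⟩ hL (hCL.ssubset_of_ne hne)
  linarith [hC.norm_le x hx, mul_lt_mul_of_pos_left hlt hb]

theorem of_mem_CKC (ha : 0 ≤ a) (hb : 0 ≤ b) {D : Set ℂ} (hD : IsNormBoundedByPerimeter a b D)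
    (hD' : D.Nonempty) (hC : C ∈ CKC D) : IsNormBoundedByPerimeter a b C :=
  genSemiring_subset (T := {C | IsNormBoundedByPerimeter a b C})
    (by rintro _ ⟨h, rfl⟩; exact hD.smul_set h) empty
    (by rw [mem_ofPred_eq, singleton_zero, ← zero_smul_set (α := ℂ) hD']; exact hD.smul_set 0)
    (fun _ hA _ hB => convexHull_union ha hb hA hB) (fun _ hA _ hB => add ha hA hB) hC

end IsNormBoundedByPerimeter

theorem stmt14_general (D : Set ℂ)
    (hDpoly : ∃ S : Finset ℂ, D = convexHull ℝ (↑S : Set ℂ))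
    (hDint : (interior D).Nonempty) (hDsymm : -D = D)
    (lam : ℂ) (A B : Set ℂ)
    (hA : A ∈ CKC D) (hB : B ∈ CKC D)
    (h : lam • D = convexHull ℝ (A ∪ B)) :
    (A = lam • D ∧ B ⊆ A) ∨ (B = lam • D ∧ A ⊆ B) := by
  obtain ⟨S, hS⟩ := hDpoly
  have hDc : IsCompact D := hS ▸ S.finite_toSet.isCompact_convexHull ℝ
  have hD0 : (0 : ℂ) ∈ D := (hS ▸ convex_convexHull ℝ _ : Convex ℝ D).zero_mem_of_neg_eq
    (hDint.mono interior_subset) hDsymm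
  obtain ⟨P, hPD, hR, hPmax⟩ := hDc.exists_norm_pos_isMaxOn hDint
  have hDbound : IsNormBoundedByPerimeter (perimeter D) ‖P‖ D :=
    ⟨⟨S, S.finite_toSet, hS⟩, fun z hz => by
      rw [mul_comm]; exact mul_le_mul_of_nonneg_right (hPmax hz) (perimeter_nonneg hDc hD0)⟩
  have hAB : A ∪ B ⊆ lam • D := h ▸ subset_convexHull ℝ _
  have hlamP : lam • P ∈ A ∪ B := by
    refine mem_of_mem_convexHull_of_forall_norm_le (h ▸ smul_mem_smul_set hPD) fun z hz => ?_
    obtain ⟨d, hd, rfl⟩ := hAB hz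
    simp only [norm_smul]
    exact mul_le_mul_of_nonneg_left (hPmax hd) (norm_nonneg lam)
  have hmax {C : Set ℂ} (hC : C ∈ CKC D) (hCsub : C ⊆ lam • D) (hPC : lam • P ∈ C) :
      C = lam • D :=
    (IsNormBoundedByPerimeter.of_mem_CKC (perimeter_nonneg hDc hD0) hR.le hDbound ⟨P, hPD⟩ hC
      ).eq_of_subset hR (hDc.smul lam) hCsub hPC
      (by rw [perimeter_smul_set, norm_smul]; exact le_of_eq (by ring))
  rcases hlamP with hPA | hPB
  · have hAeq := hmax hA (subset_union_left.trans hAB) hPA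
    exact Or.inl ⟨hAeq, hAeq ▸ subset_union_right.trans hAB⟩
  · have hBeq := hmax hB (subset_union_right.trans hAB) hPB
    exact Or.inr ⟨hBeq, hBeq ▸ subset_union_left.trans hAB⟩

/-- the sets `λ·D_K`, `λ ∈ ℂ*`, are the indecomposable elements of
`𝒞_{K,ℂ}` for the operation `Conv(• ∪ •)`: if `λ·D_K = Conv(A ∪ B)` with
`A, B ∈ 𝒞_{K,ℂ}` then one of `A, B` equals `λ·D_K` and contains the other. -/
theorem stmt14 (D : Set ℂ)
    (hDpoly : ∃ S : Finset ℂ, D = convexHull ℝ (↑S : Set ℂ))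
    (hDint : (interior D).Nonempty) (hDsymm : -D = D)
    (lam : ℂ) (hlam : lam ≠ 0) (A B : Set ℂ)
    (hA : A ∈ CKC D) (hB : B ∈ CKC D)
    (h : lam • D = convexHull ℝ (A ∪ B)) :
    (A = lam • D ∧ B ⊆ A) ∨ (B = lam • D ∧ A ⊆ B) :=
  stmt14_general D hDpoly hDint hDsymm lam A B hA hB h
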